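/- Let A be a positive operator and T ∈ B_A(H). Then w_A(T) = sup over θ ∈ ℝ of ‖Re_A(e^{iθ}T)‖_A, and also w_A(T) = sup over θ ∈ ℝ of ‖Im_A(e^{iθ}T)‖_A, where Re_A(S) = (S+S^{♯A})/2 and Im_A(S) = (S−S^{♯A})/(2i). -/

import Mathlib

noncomputable section
open Complex ContinuousLinearMap

variable {H : Type*} [NormedAddCommGroup H] [InnerProductSpace ℂ H] [CompleteSpace H]

/-- The `A`-inner product `⟨x,y⟩_A = ⟨Ax,y⟩`. -/
def innA (A : H →L[ℂ] H) (x y : H) : ℂ := inner ℂ (A x) y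

/-- The `A`-seminorm of a vector, `‖x‖_A = √⟨x,x⟩_A`. -/
def vnormA (A : H →L[ℂ] H) (x : H) : ℝ := Real.sqrt (innA A x x).re

/-- The `A`-numerical radius `w_A(T) = sup{|⟨Tx,x⟩_A| : ‖x‖_A = 1}`. -/
def wA (A T : H →L[ℂ] H) : ℝ :=
  sSup {r : ℝ | ∃ x : H, vnormA A x = 1 ∧ r = ‖innA A (T x) x‖}

/-- The `A`-operator seminorm, `sup` over `A`-unit vectors in the closure of the range of `A`. -/
def opNormA (A T : H →L[ℂ] H) : ℝ :=
  sSup {r : ℝ | ∃ x : H, x ∈ closure (Set.range A) ∧ vnormA A x = 1 ∧ r = vnormA A (T x)}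

/-- The `A`-operator seminorm, `sup` over all `A`-unit vectors (used when `A > 0`). -/
def opNormA' (A T : H →L[ℂ] H) : ℝ :=
  sSup {r : ℝ | ∃ x : H, vnormA A x = 1 ∧ r = vnormA A (T x)}

/-- The `A`-Crawford number `c_A(T) = inf{|⟨Tx,x⟩_A| : ‖x‖_A = 1}`. -/
def cA (A T : H →L[ℂ] H) : ℝ :=
  sInf {r : ℝ | ∃ x : H, vnormA A x = 1 ∧ r = ‖innA A (T x) x‖}

/-- The `A`-minimum modulus `m_A(T) = inf{‖Tx‖_A : ‖x‖_A = 1}` (version for `A > 0`). -/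
def mA (A T : H →L[ℂ] H) : ℝ :=
  sInf {r : ℝ | ∃ x : H, vnormA A x = 1 ∧ r = vnormA A (T x)}

/-- `S` is an `A`-adjoint of `T`, i.e. `A S = T* A`. -/
def IsAAdjoint (A T S : H →L[ℂ] H) : Prop :=
  A.comp S = (ContinuousLinearMap.adjoint T).comp A

/-- `A` is strictly positive: positive and `⟨Ax,x⟩ > 0` for all `x ≠ 0`. -/
def StrictPos (A : H →L[ℂ] H) : Prop :=
  A.IsPositive ∧ ∀ x : H, x ≠ 0 → 0 < (innA A x x).re

/-- The inner product on `H ⊕ H`. -/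
def inn2 (u v : H × H) : ℂ := inner ℂ u.1 v.1 + inner ℂ u.2 v.2

/-- `B = diag(A, A)` acting on `H ⊕ H`. -/
def Bop (A : H →L[ℂ] H) : H × H →L[ℂ] H × H := A.prodMap A

/-- The `B`-seminorm on `H ⊕ H`. -/
def vnormB (A : H →L[ℂ] H) (u : H × H) : ℝ := Real.sqrt (inn2 (Bop A u) u).re

/-- The `B`-numerical radius on `H ⊕ H`, where `B = diag(A, A)`. -/
def wB (A : H →L[ℂ] H) (S : H × H →L[ℂ] H × H) : ℝ :=
  sSup {r : ℝ | ∃ u : H × H, vnormB A u = 1 ∧ r = ‖inn2 (Bop A (S u)) u‖}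

/-- The `2 × 2` operator matrix `[[X, Y], [Z, W]]` acting on `H ⊕ H`. -/
def blk (X Y Z W : H →L[ℂ] H) : H × H →L[ℂ] H × H :=
  ((X.comp (ContinuousLinearMap.fst ℂ H H)) + (Y.comp (ContinuousLinearMap.snd ℂ H H))).prod
    ((Z.comp (ContinuousLinearMap.fst ℂ H H)) + (W.comp (ContinuousLinearMap.snd ℂ H H)))

/-!
If `R` is `A`-selfadjoint and `|⟨Rz, z⟩_A| ≤ M ‖z‖_A²` for all `z`, the Hilbert-space polarization
argument `2 Re ⟨Rx, y⟩_A ≤ M (‖x‖_A² + ‖y‖_A²)` with `y = Rx / ‖Rx‖_A` gives `‖R‖_A ≤ M`.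
Since `⟨Re_A(e^{iθ} T) x, x⟩_A = Re (e^{-iθ} ⟨Tx, x⟩_A)`, this applies with `M = w_A(T)`, and
`θ = arg ⟨Tx, x⟩_A` turns the real part into `|⟨Tx, x⟩_A|`, which gives the reverse inequality.
Restricting `‖·‖_A` to `closure (range A)` costs nothing: a vector and its orthogonal
projection onto that subspace have the same image under `A`. The second identity follows from
`Im_A(e^{iθ} T) = Re_A(e^{i(θ - π/2)} T)`.
-/

lemma conj_exp_mul_I (θ : ℝ) : starRingEnd ℂ (exp (θ * I)) = exp (-(θ * I)) := by
  rw [← exp_conj, map_mul, conj_ofReal, conj_I, mul_neg]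

lemma conj_exp_neg_mul_I (θ : ℝ) : starRingEnd ℂ (exp (-(θ * I))) = exp (θ * I) := by
  rw [← conj_exp_mul_I, conj_conj]

lemma norm_exp_neg_ofReal_mul_I (θ : ℝ) : ‖exp (-(θ * I))‖ = 1 := by
  rw [← conj_exp_mul_I, norm_conj, norm_exp_ofReal_mul_I]

lemma exp_neg_arg_mul_I_mul_self (z : ℂ) : exp (-(z.arg * I)) * z = ‖z‖ := by
  nth_rewrite 2 [← norm_mul_exp_arg_mul_I z]
  rw [mul_left_comm, ← exp_add, neg_add_cancel, exp_zero, mul_one]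

lemma le_of_forall_pow_two_pow_le_mul {a b c : ℝ} (hb : 0 ≤ b)
    (h : ∀ n : ℕ, a ^ 2 ^ n ≤ b ^ 2 ^ n * c) : a ≤ b := by
  by_contra! hba
  have ha : 0 < a := hb.trans_lt hba
  rcases hb.eq_or_lt with rfl | hb
  · simpa [(pow_pos ha 2).not_ge] using h 1
  · have hr : 1 < a / b := (one_lt_div hb).2 hba
    obtain ⟨n, hn⟩ := pow_unbounded_of_one_lt c hr
    have hc : (a / b) ^ 2 ^ n ≤ c := by
      rw [div_pow, div_le_iff₀ (pow_pos hb _), mul_comm]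
      exact h n
    have := pow_le_pow_right₀ hr.le (Nat.lt_two_pow_self (n := n)).le
    linarith

section AGeometry

variable {E : Type*} [NormedAddCommGroup E] [InnerProductSpace ℂ E] {A T S R : E →L[ℂ] E}

lemma vnormA_nonneg (x : E) : 0 ≤ vnormA A x := Real.sqrt_nonneg _

lemma wA_nonneg : 0 ≤ wA A T :=
  Real.sSup_nonneg (by rintro r ⟨x, -, rfl⟩; exact norm_nonneg _)

lemma opNormA_nonneg : 0 ≤ opNormA A T :=
  Real.sSup_nonneg (by rintro r ⟨x, -, -, rfl⟩; exact vnormA_nonneg _)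

lemma innA_smul_left (c : ℂ) (x y : E) : innA A (c • x) y = starRingEnd ℂ c * innA A x y := by
  simp [innA, mul_comm]

lemma innA_smul_right (c : ℂ) (x y : E) : innA A x (c • y) = c * innA A x y := by
  simp [innA]

lemma innA_add_left (x y z : E) : innA A (x + y) z = innA A x z + innA A y z := by
  simp [innA]

lemma innA_add_self_sub_innA_sub_self (R : E →L[ℂ] E) (x y : E) :
    innA A (R (x + y)) (x + y) - innA A (R (x - y)) (x - y)
      = 2 * (innA A (R x) y + innA A (R y) x) := by
  simp only [innA, map_add, map_sub, inner_add_left, inner_add_right, inner_sub_left,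
    inner_sub_right]
  ring

variable [CompleteSpace E]

lemma isAAdjoint_iff : IsAAdjoint A T S ↔ A * S = star T * A := Iff.rfl

lemma IsAAdjoint.apply_eq_adjoint_apply (h : IsAAdjoint A T S) (x : E) :
    A (S x) = adjoint T (A x) := congrArg (· x) h

lemma IsAAdjoint.innA_apply_left (h : IsAAdjoint A T S) (x y : E) :
    innA A (S x) y = innA A x (T y) := by
  rw [innA, h.apply_eq_adjoint_apply, adjoint_inner_left, innA]

lemma IsAAdjoint.symm (hA : IsSelfAdjoint A) (h : IsAAdjoint A T S) : IsAAdjoint A S T := by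
  rw [isAAdjoint_iff] at h ⊢
  simpa [star_mul, hA.star_eq] using (congrArg star h).symm

lemma IsAAdjoint.mul {T' S' : E →L[ℂ] E} (h : IsAAdjoint A T S) (h' : IsAAdjoint A T' S') :
    IsAAdjoint A (T' * T) (S * S') := by
  rw [isAAdjoint_iff] at h h' ⊢
  rw [← mul_assoc, h, mul_assoc, h', star_mul, mul_assoc]

lemma innA_conj (hA : IsSelfAdjoint A) (x y : E) :
    starRingEnd ℂ (innA A x y) = innA A y x := by
  rw [innA, innA, inner_conj_symm, ← adjoint_inner_left, ← star_eq_adjoint, hA.star_eq]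

lemma innA_congr (hA : IsSelfAdjoint A) {x x' y y' : E} (hx : A x = A x') (hy : A y = A y') :
    innA A x y = innA A x' y' := by
  rw [innA, hx, ← innA, ← innA_conj hA, innA, hy, ← innA, innA_conj hA]

lemma innA_eq_inner_sqrt (hA : A.IsPositive) (x y : E) :
    innA A x y = inner ℂ (CFC.sqrt A x) (CFC.sqrt A y) := by
  have hsa : IsSelfAdjoint (CFC.sqrt A) := IsSelfAdjoint.of_nonneg (CFC.sqrt_nonneg A)
  conv_lhs =>
    rw [innA, ← CFC.sqrt_mul_sqrt_self A (A.nonneg_iff_isPositive.2 hA), mul_apply_eq_comp]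
  nth_rewrite 1 [← hsa.star_eq]
  rw [star_eq_adjoint, adjoint_inner_left]

lemma vnormA_eq_norm_sqrt (hA : A.IsPositive) (x : E) : vnormA A x = ‖CFC.sqrt A x‖ := by
  rw [vnormA, innA_eq_inner_sqrt hA, inner_self_eq_norm_sq_to_K (𝕜 := ℂ)]
  norm_cast
  exact Real.sqrt_sq (norm_nonneg _)

lemma innA_self (hA : A.IsPositive) (x : E) : innA A x x = ((vnormA A x ^ 2 : ℝ) : ℂ) := by
  rw [innA_eq_inner_sqrt hA, inner_self_eq_norm_sq_to_K, vnormA_eq_norm_sqrt hA]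
  norm_cast

lemma norm_innA_le (hA : A.IsPositive) (x y : E) :
    ‖innA A x y‖ ≤ vnormA A x * vnormA A y := by
  rw [innA_eq_inner_sqrt hA, vnormA_eq_norm_sqrt hA, vnormA_eq_norm_sqrt hA]
  exact norm_inner_le_norm _ _

lemma vnormA_smul (hA : A.IsPositive) (c : ℂ) (x : E) :
    vnormA A (c • x) = ‖c‖ * vnormA A x := by
  rw [vnormA_eq_norm_sqrt hA, vnormA_eq_norm_sqrt hA, map_smul, norm_smul]

lemma vnormA_inv_smul_self (hA : A.IsPositive) {x : E} (hx : vnormA A x ≠ 0) :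
    vnormA A ((vnormA A x : ℂ)⁻¹ • x) = 1 := by
  rw [vnormA_smul hA, norm_inv, norm_real, Real.norm_of_nonneg (vnormA_nonneg x),
    inv_mul_cancel₀ hx]

lemma vnormA_add_sq_add_vnormA_sub_sq (hA : A.IsPositive) (x y : E) :
    vnormA A (x + y) ^ 2 + vnormA A (x - y) ^ 2 = 2 * (vnormA A x ^ 2 + vnormA A y ^ 2) := by
  simp only [vnormA_eq_norm_sqrt hA, map_add, map_sub]
  exact parallelogram_law_with_norm ℂ (CFC.sqrt A x) (CFC.sqrt A y)

lemma exists_mem_closure_range_apply_eq (hA : IsSelfAdjoint A) (x : E) :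
    ∃ u ∈ closure (Set.range A), A u = A x := by
  obtain ⟨u, hu, v, hv, rfl⟩ := A.range.closure.exists_add_mem_mem_orthogonal x
  rw [ClosedSubmodule.orthogonal_closure, orthogonal_range, ← star_eq_adjoint, hA.star_eq] at hv
  have hAv : A v = 0 := hv
  refine ⟨u, ?_, by rw [map_add, hAv, add_zero]⟩
  have hu' : u ∈ (A : E →ₗ[ℂ] E).range.topologicalClosure := by simpa using hu
  rwa [← SetLike.mem_coe, Submodule.topologicalClosure_coe, LinearMap.coe_range] at hu'

end AGeometry

section ABounded

variable {E : Type*} [NormedAddCommGroup E] [InnerProductSpace ℂ E] [CompleteSpace E]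
  {A T S R : E →L[ℂ] E}

lemma IsAAdjoint.vnormA_apply_sq_le (hA : A.IsPositive) (hR : IsAAdjoint A R R) (x : E) :
    vnormA A (R x) ^ 2 ≤ vnormA A x * vnormA A (R (R x)) := by
  calc vnormA A (R x) ^ 2 = ‖innA A (R x) (R x)‖ := by
        rw [innA_self hA, norm_real, Real.norm_of_nonneg (sq_nonneg _)]
    _ = ‖innA A x (R (R x))‖ := by rw [hR.innA_apply_left]
    _ ≤ vnormA A x * vnormA A (R (R x)) := norm_innA_le hA _ _

lemma IsAAdjoint.vnormA_apply_pow_le (hA : A.IsPositive) (hR : IsAAdjoint A R R) {x : E}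
    (hx : vnormA A x = 1) (n : ℕ) : vnormA A (R x) ^ 2 ^ n ≤ vnormA A ((R ^ 2 ^ n) x) := by
  induction n generalizing R with
  | zero => simp
  | succ n ih =>
    calc vnormA A (R x) ^ 2 ^ (n + 1) = (vnormA A (R x) ^ 2) ^ 2 ^ n := by
          rw [← pow_mul, pow_succ, mul_comm]
      _ ≤ vnormA A ((R * R) x) ^ 2 ^ n := by
          gcongr
          simpa [hx] using hR.vnormA_apply_sq_le hA x
      _ ≤ vnormA A (((R * R) ^ 2 ^ n) x) := ih (hR.mul hR)
      _ = vnormA A ((R ^ 2 ^ (n + 1)) x) := by rw [← sq, ← pow_mul, pow_succ']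

/-- Power trick: `‖R^(2^n) x‖_A ≤ ‖√A‖ ‖R‖^(2^n) ‖x‖`, and `2^n`-th roots kill the constant. -/
lemma IsAAdjoint.vnormA_apply_le (hA : A.IsPositive) (hR : IsAAdjoint A R R) {x : E}
    (hx : vnormA A x = 1) : vnormA A (R x) ≤ ‖R‖ := by
  refine le_of_forall_pow_two_pow_le_mul (norm_nonneg R) (c := ‖CFC.sqrt A‖ * ‖x‖) fun n ↦ ?_
  calc vnormA A (R x) ^ 2 ^ n ≤ vnormA A ((R ^ 2 ^ n) x) := hR.vnormA_apply_pow_le hA hx n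
    _ ≤ ‖CFC.sqrt A‖ * (‖R ^ 2 ^ n‖ * ‖x‖) := by
        rw [vnormA_eq_norm_sqrt hA]
        exact (le_opNorm _ _).trans (by gcongr; exact le_opNorm _ _)
    _ ≤ ‖CFC.sqrt A‖ * (‖R‖ ^ 2 ^ n * ‖x‖) := by
        gcongr
        exact norm_pow_le' R (Nat.two_pow_pos n)
    _ = ‖R‖ ^ 2 ^ n * (‖CFC.sqrt A‖ * ‖x‖) := by ring

/-- `‖T x‖_A² = ⟨x, S T x⟩_A`, and `S T` is `A`-selfadjoint. -/
lemma IsAAdjoint.exists_vnormA_apply_le (hA : A.IsPositive) (h : IsAAdjoint A T S) :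
    ∃ C, ∀ x, vnormA A x = 1 → vnormA A (T x) ≤ C := by
  have h' := h.symm hA.isSelfAdjoint
  have hST : IsAAdjoint A (S * T) (S * T) := h.mul h'
  refine ⟨√‖S * T‖, fun x hx ↦ le_of_sq_le_sq ?_ (Real.sqrt_nonneg _)⟩
  calc vnormA A (T x) ^ 2 = ‖innA A (T x) (T x)‖ := by
        rw [innA_self hA, norm_real, Real.norm_of_nonneg (sq_nonneg _)]
    _ = ‖innA A x ((S * T) x)‖ := by rw [h'.innA_apply_left]; rfl
    _ ≤ vnormA A x * vnormA A ((S * T) x) := norm_innA_le hA _ _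
    _ ≤ √‖S * T‖ ^ 2 := by
        rw [hx, one_mul, Real.sq_sqrt (norm_nonneg _)]
        exact hST.vnormA_apply_le hA hx

lemma IsAAdjoint.bddAbove_wA (hA : A.IsPositive) (h : IsAAdjoint A T S) :
    BddAbove {r : ℝ | ∃ x : E, vnormA A x = 1 ∧ r = ‖innA A (T x) x‖} := by
  obtain ⟨C, hC⟩ := h.exists_vnormA_apply_le hA
  refine ⟨C, ?_⟩
  rintro r ⟨x, hx, rfl⟩
  calc ‖innA A (T x) x‖ ≤ vnormA A (T x) * vnormA A x := norm_innA_le hA _ _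
    _ ≤ C := by rw [hx, mul_one]; exact hC x hx

lemma IsAAdjoint.bddAbove_opNormA (hA : A.IsPositive) (h : IsAAdjoint A T S) :
    BddAbove
      {r : ℝ | ∃ x : E, x ∈ closure (Set.range A) ∧ vnormA A x = 1 ∧ r = vnormA A (T x)} := by
  obtain ⟨C, hC⟩ := h.exists_vnormA_apply_le hA
  exact ⟨C, by rintro r ⟨x, -, hx, rfl⟩; exact hC x hx⟩

end ABounded

section NumericalRadius

variable {E : Type*} [NormedAddCommGroup E] [InnerProductSpace ℂ E] [CompleteSpace E]
  {A T S R : E →L[ℂ] E}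

lemma IsAAdjoint.norm_innA_le_wA_mul (hA : A.IsPositive) (h : IsAAdjoint A T S) (z : E) :
    ‖innA A (T z) z‖ ≤ wA A T * vnormA A z ^ 2 := by
  rcases eq_or_ne (vnormA A z) 0 with hz | hz
  · simpa [hz] using norm_innA_le hA (T z) z
  · have hle : ‖innA A (T ((vnormA A z : ℂ)⁻¹ • z)) ((vnormA A z : ℂ)⁻¹ • z)‖ ≤ wA A T :=
      le_csSup (h.bddAbove_wA hA) ⟨_, vnormA_inv_smul_self hA hz, rfl⟩
    rw [map_smul, innA_smul_left, innA_smul_right, norm_mul, norm_mul, norm_conj, norm_inv,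
      norm_real, Real.norm_of_nonneg (vnormA_nonneg z)] at hle
    have ht : 0 < vnormA A z := (vnormA_nonneg z).lt_of_ne' hz
    rw [inv_mul_le_iff₀ ht, inv_mul_le_iff₀ ht] at hle
    linarith

lemma IsAAdjoint.two_mul_re_innA_le (hA : A.IsPositive) (hR : IsAAdjoint A R R) {M : ℝ}
    (hM : ∀ z, ‖innA A (R z) z‖ ≤ M * vnormA A z ^ 2) (x y : E) :
    2 * (innA A (R x) y).re ≤ M * (vnormA A x ^ 2 + vnormA A y ^ 2) := by
  have hpol : (innA A (R (x + y)) (x + y)).re - (innA A (R (x - y)) (x - y)).re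
      = 4 * (innA A (R x) y).re := by
    rw [← sub_re, innA_add_self_sub_innA_sub_self, hR.innA_apply_left y x,
      ← innA_conj hA.isSelfAdjoint (R x) y, add_conj]
    simp only [mul_re, ofReal_re, ofReal_im]
    norm_num
    ring
  have hplus := (re_le_norm _).trans (hM (x + y))
  have hminus := ((neg_le_abs _).trans (abs_re_le_norm _)).trans (hM (x - y))
  have hpar : M * vnormA A (x + y) ^ 2 + M * vnormA A (x - y) ^ 2
      = 2 * (M * (vnormA A x ^ 2 + vnormA A y ^ 2)) := by
    rw [← mul_add, vnormA_add_sq_add_vnormA_sub_sq hA]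
    ring
  linarith

lemma IsAAdjoint.opNormA_le_of_norm_innA_le (hA : A.IsPositive) (hR : IsAAdjoint A R R) {M : ℝ}
    (hM0 : 0 ≤ M) (hM : ∀ z, ‖innA A (R z) z‖ ≤ M * vnormA A z ^ 2) : opNormA A R ≤ M := by
  refine Real.sSup_le ?_ hM0
  rintro r ⟨u, -, hu, rfl⟩
  rcases eq_or_ne (vnormA A (R u)) 0 with hRu | hRu
  · exact hRu ▸ hM0
  · have hre : (innA A (R u) ((vnormA A (R u) : ℂ)⁻¹ • R u)).re = vnormA A (R u) := by
      rw [innA_smul_right, innA_self hA, ← ofReal_inv, ← ofReal_mul, ofReal_re, sq,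
        inv_mul_cancel_left₀ hRu]
    have := hR.two_mul_re_innA_le hA hM u ((vnormA A (R u) : ℂ)⁻¹ • R u)
    rw [hre, hu, vnormA_inv_smul_self hA hRu] at this
    linarith

lemma IsAAdjoint.norm_innA_le_opNormA (hA : A.IsPositive) (h : IsAAdjoint A T S) {x : E}
    (hx : vnormA A x = 1) : ‖innA A (T x) x‖ ≤ opNormA A T := by
  have h' := h.symm hA.isSelfAdjoint
  obtain ⟨u, hu, hAu⟩ := exists_mem_closure_range_apply_eq hA.isSelfAdjoint x
  have hATu : A (T u) = A (T x) := by
    rw [h'.apply_eq_adjoint_apply, h'.apply_eq_adjoint_apply, hAu]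
  have hu1 : vnormA A u = 1 := by
    rw [vnormA, innA_congr hA.isSelfAdjoint hAu hAu, ← vnormA, hx]
  calc ‖innA A (T x) x‖ = ‖innA A (T u) u‖ := by rw [innA_congr hA.isSelfAdjoint hATu hAu]
    _ ≤ vnormA A (T u) * vnormA A u := norm_innA_le hA _ _
    _ ≤ opNormA A T := by
        rw [hu1, mul_one]
        exact le_csSup (h.bddAbove_opNormA hA) ⟨u, hu, hu1, rfl⟩

end NumericalRadius

section RealPart

variable {E : Type*} [NormedAddCommGroup E] [InnerProductSpace ℂ E]

/-- `Re_A(e^{iθ} T) = (e^{iθ} T + (e^{iθ} T)^{♯A}) / 2`, where `S` is the `A`-adjoint of `T`. -/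
def realPartA (T S : E →L[ℂ] E) (θ : ℝ) : E →L[ℂ] E :=
  (2 : ℂ)⁻¹ • (exp (θ * I) • T + exp (-(θ * I)) • S)

lemma realPartA_sub_pi_div_two (T S : E →L[ℂ] E) (θ : ℝ) :
    realPartA T S (θ - Real.pi / 2) = (2 * I)⁻¹ • (exp (θ * I) • T - exp (-(θ * I)) • S) := by
  have hexp : exp (↑(θ - Real.pi / 2) * I) = -I * exp (θ * I) := by
    rw [ofReal_sub, sub_mul, exp_sub, ofReal_div, ofReal_ofNat, exp_pi_div_two_mul_I]
    field_simp
    rw [I_sq]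
    ring
  have hexp' : exp (-(↑(θ - Real.pi / 2) * I)) = I * exp (-(θ * I)) := by
    rw [← conj_exp_mul_I, hexp, map_mul, conj_exp_mul_I, map_neg, conj_I, neg_neg]
  rw [realPartA, hexp, hexp', mul_inv, inv_I, mul_smul, mul_smul, mul_smul]
  module

variable [CompleteSpace E] {A T S : E →L[ℂ] E}

lemma IsAAdjoint.isAAdjoint_realPartA (hA : A.IsPositive) (h : IsAAdjoint A T S) (θ : ℝ) :
    IsAAdjoint A (realPartA T S θ) (realPartA T S θ) := by
  have h' := h.symm hA.isSelfAdjoint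
  rw [isAAdjoint_iff] at h h' ⊢
  simp only [realPartA, star_smul, star_add, smul_mul_assoc, mul_smul_comm, mul_add, add_mul,
    h, h', star_def, conj_exp_mul_I, conj_exp_neg_mul_I, map_inv₀, map_ofNat]
  module

lemma IsAAdjoint.innA_realPartA_apply (hA : A.IsPositive) (h : IsAAdjoint A T S) (θ : ℝ)
    (x : E) : innA A (realPartA T S θ x) x = ((exp (-(θ * I)) * innA A (T x) x).re : ℂ) := by
  have hS : innA A (S x) x = starRingEnd ℂ (innA A (T x) x) := by
    rw [h.innA_apply_left, innA_conj hA.isSelfAdjoint]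
  simp only [realPartA, smul_apply, add_apply, innA_smul_left, innA_add_left, hS, map_inv₀,
    map_ofNat, conj_exp_mul_I, conj_exp_neg_mul_I]
  rw [← conj_exp_neg_mul_I, ← map_mul, add_conj]
  push_cast
  ring

lemma IsAAdjoint.wA_eq_sSup_opNormA_realPartA (hA : A.IsPositive) (h : IsAAdjoint A T S) :
    wA A T = sSup {r : ℝ | ∃ θ : ℝ, r = opNormA A (realPartA T S θ)} := by
  have hle (θ : ℝ) : opNormA A (realPartA T S θ) ≤ wA A T := by
    refine (h.isAAdjoint_realPartA hA θ).opNormA_le_of_norm_innA_le hA wA_nonneg fun z ↦ ?_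
    calc ‖innA A (realPartA T S θ z) z‖ = |(exp (-(θ * I)) * innA A (T z) z).re| := by
          rw [h.innA_realPartA_apply hA, norm_real, Real.norm_eq_abs]
      _ ≤ ‖innA A (T z) z‖ := by
          simpa [norm_exp_neg_ofReal_mul_I] using abs_re_le_norm (exp (-(θ * I)) * innA A (T z) z)
      _ ≤ wA A T * vnormA A z ^ 2 := h.norm_innA_le_wA_mul hA z
  have hbdd : BddAbove {r : ℝ | ∃ θ : ℝ, r = opNormA A (realPartA T S θ)} :=
    ⟨wA A T, by rintro r ⟨θ, rfl⟩; exact hle θ⟩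
  refine le_antisymm (Real.sSup_le ?_ ?_)
    (Real.sSup_le (by rintro r ⟨θ, rfl⟩; exact hle θ) wA_nonneg)
  · rintro r ⟨x, hx, rfl⟩
    calc ‖innA A (T x) x‖ = ‖innA A (realPartA T S (innA A (T x) x).arg x) x‖ := by
          rw [h.innA_realPartA_apply hA, exp_neg_arg_mul_I_mul_self, ofReal_re, norm_real,
            norm_norm]
      _ ≤ opNormA A (realPartA T S (innA A (T x) x).arg) :=
          (h.isAAdjoint_realPartA hA _).norm_innA_le_opNormA hA hx
      _ ≤ _ := le_csSup hbdd ⟨_, rfl⟩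
  · exact opNormA_nonneg.trans (le_csSup hbdd ⟨0, rfl⟩)

end RealPart

theorem stmt2 (A T S : H →L[ℂ] H) (hA : A.IsPositive) (hS : IsAAdjoint A T S) :
    wA A T = sSup {r : ℝ | ∃ θ : ℝ, r = opNormA A ((2:ℂ)⁻¹ • (Complex.exp ((θ : ℝ) * Complex.I) • T + Complex.exp (-((θ : ℝ) * Complex.I)) • S))} ∧
    wA A T = sSup {r : ℝ | ∃ θ : ℝ, r = opNormA A ((2 * Complex.I)⁻¹ • (Complex.exp ((θ : ℝ) * Complex.I) • T - Complex.exp (-((θ : ℝ) * Complex.I)) • S))} := by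
  have hre := hS.wA_eq_sSup_opNormA_realPartA hA
  refine ⟨hre, hre.trans (congrArg sSup (Set.ext fun r ↦ ⟨?_, ?_⟩))⟩
  · rintro ⟨θ, rfl⟩
    exact ⟨θ + Real.pi / 2, by rw [← realPartA_sub_pi_div_two, add_sub_cancel_right]⟩
  · rintro ⟨θ, rfl⟩
    exact ⟨θ - Real.pi / 2, by rw [realPartA_sub_pi_div_two]⟩
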